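/- Let S ⊆ Sⁿ be a linear subspace invariant under squaring, and let X ∈ S be nonzero with spectral decomposition X = Σ_{E ∈ E_X} λ_E E, where E_X is the set of orthogonal projections onto the eigenspaces of X for the distinct nonzero eigenvalues λ_E. Then every E ∈ E_X belongs to S. -/

import Mathlib

/-!
Polarizing `(a + b)² ∈ S` gives `ab + ba ∈ S`, so (since `2` is invertible) every power `Xᵏ`,
`k ≥ 1`, lies in `S`; hence `p(X) ∈ S` for every polynomial `p` without constant term. For
orthogonal idempotents `Eᵢ`, `p(Σ λᵢ Eᵢ) = Σ p(λᵢ) Eᵢ` when `p(0) = 0`, and for the Lagrange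
basis polynomial `Lᵢ` at the distinct nonzero nodes `λⱼ`, `p = X Lᵢ / λᵢ` has `p(0) = 0` and
`p(λⱼ) = δᵢⱼ`, so `p(X) = Eᵢ`.
-/

open Polynomial

namespace Submodule

variable {K A : Type*} [Field K] [Ring A] [Algebra K A]

theorem mul_add_mul_mem_of_mul_self_mem (S : Submodule K A) (hsq : ∀ x ∈ S, x * x ∈ S)
    {a b : A} (ha : a ∈ S) (hb : b ∈ S) : a * b + b * a ∈ S := by
  have h : a * b + b * a = (a + b) * (a + b) - a * a - b * b := by noncomm_ring
  rw [h]
  exact S.sub_mem (S.sub_mem (hsq _ (S.add_mem ha hb)) (hsq a ha)) (hsq b hb)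

theorem pow_succ_mem_of_mul_self_mem [NeZero (2 : K)] (S : Submodule K A)
    (hsq : ∀ x ∈ S, x * x ∈ S) {x : A} (hx : x ∈ S) (k : ℕ) : x ^ (k + 1) ∈ S := by
  induction k with
  | zero => simpa using hx
  | succ k ih =>
    have h2 : (2 : K) • x ^ (k + 2) = x ^ (k + 1) * x + x * x ^ (k + 1) := by
      rw [← pow_succ, ← pow_succ', two_smul]
    rw [← S.smul_mem_iff (two_ne_zero : (2 : K) ≠ 0), h2]
    exact S.mul_add_mul_mem_of_mul_self_mem hsq ih hx

theorem aeval_mem_of_mul_self_mem [NeZero (2 : K)] (S : Submodule K A)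
    (hsq : ∀ x ∈ S, x * x ∈ S) {x : A} (hx : x ∈ S) {p : K[X]} (hp : p.coeff 0 = 0) :
    aeval x p ∈ S := by
  rw [aeval_eq_sum_range]
  refine S.sum_mem fun k _ => ?_
  cases k with
  | zero => simp [hp]
  | succ k => exact S.smul_mem _ (S.pow_succ_mem_of_mul_self_mem hsq hx k)

end Submodule

namespace OrthogonalIdempotents

variable {K A ι : Type*} [Field K] [Ring A] [Algebra K A] [Fintype ι] {E : ι → A}

theorem sum_smul_pow_succ (hE : OrthogonalIdempotents E) (lam : ι → K) (k : ℕ) :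
    (∑ i, lam i • E i) ^ (k + 1) = ∑ i, lam i ^ (k + 1) • E i := by
  classical
  induction k with
  | zero => simp
  | succ k ih =>
    rw [pow_succ, ih, Finset.sum_mul_sum]
    refine Finset.sum_congr rfl fun i _ => ?_
    simp_rw [smul_mul_smul_comm, hE.mul_eq, smul_ite, smul_zero, Finset.sum_ite_eq,
      Finset.mem_univ, if_true, pow_succ]

theorem aeval_sum_smul (hE : OrthogonalIdempotents E) (lam : ι → K) {p : K[X]}
    (hp : p.coeff 0 = 0) : aeval (∑ i, lam i • E i) p = ∑ i, p.eval (lam i) • E i := by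
  have hterm : ∀ k, p.coeff k • (∑ i, lam i • E i) ^ k = ∑ i, (p.coeff k * lam i ^ k) • E i := by
    rintro (_ | k)
    · simp [hp]
    · simp_rw [hE.sum_smul_pow_succ, Finset.smul_sum, smul_smul]
  simp_rw [aeval_eq_sum_range, hterm, eval_eq_sum_range, Finset.sum_smul]
  exact Finset.sum_comm

end OrthogonalIdempotents

theorem Polynomial.exists_coeff_zero_eq_zero_eval_eq_ite {K ι : Type*} [Field K] [Fintype ι]
    [DecidableEq ι] {v : ι → K} (hv : Function.Injective v) (hv0 : ∀ j, v j ≠ 0) (i : ι) :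
    ∃ p : K[X], p.coeff 0 = 0 ∧ ∀ j, p.eval (v j) = if j = i then 1 else 0 := by
  refine ⟨X * (C (v i)⁻¹ * Lagrange.basis Finset.univ v i), coeff_X_mul_zero _, fun j => ?_⟩
  rw [eval_mul, eval_mul, eval_X, eval_C]
  split_ifs with hji
  · subst hji
    rw [Lagrange.eval_basis_self hv.injOn (Finset.mem_univ _), mul_one, mul_inv_cancel₀ (hv0 j)]
  · rw [Lagrange.eval_basis_of_ne (Ne.symm hji) (Finset.mem_univ _), mul_zero, mul_zero]

theorem stmt10_general {n : ℕ} {ι : Type*} [Fintype ι]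
    (S : Submodule ℝ (Matrix (Fin n) (Fin n) ℝ))
    (hsq : ∀ X ∈ S, X * X ∈ S)
    (X : Matrix (Fin n) (Fin n) ℝ) (hX : X ∈ S)
    (lam : ι → ℝ) (E : ι → Matrix (Fin n) (Fin n) ℝ)
    (hdecomp : X = ∑ i, lam i • E i)
    (hEidem : ∀ i, E i * E i = E i)
    (horth : ∀ i j, i ≠ j → E i * E j = 0)
    (hlam0 : ∀ i, lam i ≠ 0)
    (hinj : Function.Injective lam) :
    ∀ i, E i ∈ S := by
  classical
  intro i
  have hE : OrthogonalIdempotents E := ⟨hEidem, horth⟩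
  obtain ⟨p, hp0, hpeval⟩ := exists_coeff_zero_eq_zero_eval_eq_ite hinj hlam0 i
  have hEi : aeval X p = E i := by
    simp [hdecomp, hE.aeval_sum_smul lam hp0, hpeval]
  exact hEi ▸ S.aeval_mem_of_mul_self_mem hsq hX hp0

/-- If `S` is a subspace of real symmetric matrices invariant under squaring and
`X = Σ λᵢ • Eᵢ ∈ S` is nonzero with its spectral decomposition into pairwise orthogonal
nonzero symmetric idempotents `Eᵢ` with distinct nonzero eigenvalues `λᵢ`, then every
`Eᵢ` belongs to `S`. -/
theorem stmt10 {n : ℕ} {ι : Type*} [Fintype ι]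
    (S : Submodule ℝ (Matrix (Fin n) (Fin n) ℝ))
    (hSsym : ∀ A ∈ S, A.IsSymm)
    (hsq : ∀ X ∈ S, X * X ∈ S)
    (X : Matrix (Fin n) (Fin n) ℝ) (hX : X ∈ S) (hX0 : X ≠ 0)
    (lam : ι → ℝ) (E : ι → Matrix (Fin n) (Fin n) ℝ)
    (hdecomp : X = ∑ i, lam i • E i)
    (hEsym : ∀ i, (E i).IsSymm)
    (hEidem : ∀ i, E i * E i = E i)
    (hEne : ∀ i, E i ≠ 0)
    (horth : ∀ i j, i ≠ j → E i * E j = 0)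
    (hlam0 : ∀ i, lam i ≠ 0)
    (hinj : Function.Injective lam) :
    ∀ i, E i ∈ S :=
  stmt10_general S hsq X hX lam E hdecomp hEidem horth hlam0 hinj
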